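/- The quaternionic 2×2 matrix t = (1/2)·[[j−k, 1−i], [−j−k, 1+i]] is unitary and has order 10. -/

import Mathlib

/-!
A direct computation gives `tᴴ t = 1` and `t² t² = -tᴴ`, hence `t⁵ = -tᴴ t = -1`. So `t¹⁰ = 1`, while
`t⁵ = -1 ≠ 1` and `t² ≠ 1`; as the maximal proper divisors of `10` are `5` and `2`, the order is `10`.
-/

noncomputable section
open Quaternion Matrix

abbrev HQ := ℍ[ℝ]
def qi : HQ := ⟨0,1,0,0⟩
def qj : HQ := ⟨0,0,1,0⟩
def qk : HQ := ⟨0,0,0,1⟩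

/-- Inner product on the right ℍ-module ℍ^d. -/
def inprod {d : ℕ} (v w : Fin d → HQ) : HQ := ∑ m, star (v m) * w m


/-- The matrix t = (1/2)[[j−k, 1−i],[−j−k, 1+i]]. -/
def tMat : Matrix (Fin 2) (Fin 2) HQ :=
  (((2:ℝ)⁻¹ : HQ)) • !![qj - qk, 1 - qi; -qj - qk, 1 + qi]

theorem orderOf_eq_two_mul_of_pow_eq_neg_one {M : Type*} [Monoid M] [HasDistribNeg M]
    {x : M} {p : ℕ} (hp : p.Prime) (hx : x ^ p = -1) (hneg : (-1 : M) ≠ 1) (hsq : x ^ 2 ≠ 1) :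
    orderOf x = 2 * p := by
  refine orderOf_eq_of_pow_and_pow_div_prime (Nat.mul_pos two_pos hp.pos)
    (by rw [pow_mul', hx, neg_one_sq]) fun q hq hqp => ?_
  rcases (Nat.Prime.dvd_mul hq).mp hqp with h | h
  · rwa [(Nat.prime_dvd_prime_iff_eq hq Nat.prime_two).mp h, Nat.mul_div_cancel_left _ two_pos, hx]
  · rwa [(Nat.prime_dvd_prime_iff_eq hq hp).mp h, Nat.mul_div_cancel _ hp.pos]

section QuatCoordinates

variable {R : Type*} [CommRing R]

/-- `⟨a₁, a₂, a₃, a₄⟩ : ℍ[R]` elaborates at type `ℍ[R,-1,0,-1]`, so simp lemmas about it carry the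
`QuaternionAlgebra` instances and miss the `ℍ[R]` instances met in matrix products; `quat` pins
the type to `ℍ[R]`. -/
def quat (a₁ a₂ a₃ a₄ : R) : ℍ[R] := ⟨a₁, a₂, a₃, a₄⟩

@[simp] theorem re_quat (a₁ a₂ a₃ a₄ : R) : (quat a₁ a₂ a₃ a₄).re = a₁ := rfl
@[simp] theorem imI_quat (a₁ a₂ a₃ a₄ : R) : (quat a₁ a₂ a₃ a₄).imI = a₂ := rfl
@[simp] theorem imJ_quat (a₁ a₂ a₃ a₄ : R) : (quat a₁ a₂ a₃ a₄).imJ = a₃ := rfl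
@[simp] theorem imK_quat (a₁ a₂ a₃ a₄ : R) : (quat a₁ a₂ a₃ a₄).imK = a₄ := rfl

@[simp]
theorem quat_mul_quat (a₁ a₂ a₃ a₄ b₁ b₂ b₃ b₄ : R) :
    quat a₁ a₂ a₃ a₄ * quat b₁ b₂ b₃ b₄ =
      quat (a₁ * b₁ - a₂ * b₂ - a₃ * b₃ - a₄ * b₄) (a₁ * b₂ + a₂ * b₁ + a₃ * b₄ - a₄ * b₃)
        (a₁ * b₃ - a₂ * b₄ + a₃ * b₁ + a₄ * b₂) (a₁ * b₄ + a₂ * b₃ - a₃ * b₂ + a₄ * b₁) := by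
  ext <;> simp

@[simp]
theorem quat_add_quat (a₁ a₂ a₃ a₄ b₁ b₂ b₃ b₄ : R) :
    quat a₁ a₂ a₃ a₄ + quat b₁ b₂ b₃ b₄ = quat (a₁ + b₁) (a₂ + b₂) (a₃ + b₃) (a₄ + b₄) := by
  ext <;> simp

@[simp]
theorem star_quat (a₁ a₂ a₃ a₄ : R) : star (quat a₁ a₂ a₃ a₄) = quat a₁ (-a₂) (-a₃) (-a₄) := by
  ext <;> simp

@[simp]
theorem neg_quat (a₁ a₂ a₃ a₄ : R) : -quat a₁ a₂ a₃ a₄ = quat (-a₁) (-a₂) (-a₃) (-a₄) := by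
  ext <;> simp

end QuatCoordinates

theorem tMat_eq : tMat = !![quat 0 0 (1/2) (-1/2), quat (1/2) (-1/2) 0 0;
    quat 0 0 (-1/2) (-1/2), quat (1/2) (1/2) 0 0] := by
  ext i j : 1
  fin_cases i <;> fin_cases j <;> ext <;> simp [tMat, ← Quaternion.coe_inv] <;> simp [qi, qj, qk] <;>
    norm_num

theorem tMat_conjTranspose_mul_self : tMatᴴ * tMat = 1 := by
  rw [tMat_eq]
  ext i j : 1
  fin_cases i <;> fin_cases j <;> ext <;> simp [Matrix.mul_apply] <;> norm_num

theorem tMat_sq : tMat ^ 2 = !![quat (-1/2) 0 (-1/2) 0, quat (1/2) 0 (1/2) 0;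
    quat 0 (1/2) 0 (-1/2), quat 0 (1/2) 0 (-1/2)] := by
  rw [sq, tMat_eq]
  ext i j : 1
  fin_cases i <;> fin_cases j <;> ext <;> simp [Matrix.mul_apply] <;> norm_num

theorem tMat_sq_mul_sq : tMat ^ 2 * tMat ^ 2 = -tMatᴴ := by
  rw [tMat_sq, tMat_eq]
  ext i j : 1
  fin_cases i <;> fin_cases j <;> ext <;> simp [Matrix.mul_apply] <;> norm_num

theorem tMat_pow_five : tMat ^ 5 = -1 := by
  rw [show 5 = 2 + 2 + 1 from rfl, pow_succ, pow_add, tMat_sq_mul_sq, neg_mul,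
    tMat_conjTranspose_mul_self]

theorem tMat_sq_ne_one : tMat ^ 2 ≠ 1 := by
  intro h
  have h₀₀ := congrArg (fun M => (M 0 0).re) h
  norm_num [tMat_sq] at h₀₀

theorem Matrix.neg_one_ne_one_quaternion {n : Type*} [DecidableEq n] [Nonempty n] :
    (-1 : Matrix n n ℍ[ℝ]) ≠ 1 := by
  intro h
  have hdiag := congrArg (fun M => (M (Classical.arbitrary n) (Classical.arbitrary n)).re) h
  norm_num at hdiag

/-- t is unitary and has order 10. -/
theorem tMat_unitary_order_ten : tMatᴴ * tMat = 1 ∧ orderOf tMat = 10 :=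
  ⟨tMat_conjTranspose_mul_self, orderOf_eq_two_mul_of_pow_eq_neg_one Nat.prime_five tMat_pow_five
    Matrix.neg_one_ne_one_quaternion tMat_sq_ne_one⟩
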